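/- If W is a common subsequence of the set of strings A and there exist 0 ≤ k ≤ |W| and a character c common to all Middle(A_l, W, k), then W is a proper subsequence of some common subsequence of A of strictly greater length; consequently, any procedure that repeatedly performs such insertions starting from the empty string terminates after at most min_l |A_l| insertions with a maximal common subsequence. -/

import Mathlib

open List

/-- Length of the shortest prefix of `A` containing `W` as a subsequence. -/
noncomputable def minPrefixLen {α : Type*} (A W : List α) : ℕ :=
  sInf {n | W <+ A.take n}

/-- Length of the shortest suffix of `A` containing `W` as a subsequence. -/
noncomputable def minSuffixLen {α : Type*} (A W : List α) : ℕ :=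
  sInf {n | W <+ A.drop (A.length - n)}

/-- `Middle A W k`: what remains of `A` after deleting the shortest prefix containing
`W.take k` as a subsequence and the shortest suffix containing `W.drop k`. -/
noncomputable def Middle {α : Type*} (A W : List α) (k : ℕ) : List α :=
  (A.take (A.length - minSuffixLen A (W.drop k))).drop (minPrefixLen A (W.take k))

/-- `W` is a common subsequence of all strings in `𝒜`. -/
def IsCommonSubseq {α : Type*} (𝒜 : Finset (List α)) (W : List α) : Prop :=
  ∀ A ∈ 𝒜, W <+ A

/-- `W` is a maximal common subsequence of `𝒜`: it is a common subsequence and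
inserting any single character at any position never yields a common subsequence. -/
def IsMCS {α : Type*} (𝒜 : Finset (List α)) (W : List α) : Prop :=
  IsCommonSubseq 𝒜 W ∧
    ∀ (c : α) (k : ℕ), k ≤ W.length →
      ¬ IsCommonSubseq 𝒜 (W.take k ++ c :: W.drop k)


/-
Inserting `c` at position `k` keeps `W` a subsequence of `A`: embed `W.take k` into the shortest
prefix, `W.drop k` into the shortest suffix, and `c` into what lies between them. Each insertion
lengthens a common subsequence by one, and a common subsequence is no longer than `A₀ ∈ 𝒜`,
so at most `|A₀|` insertions can happen before a maximal one is reached.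
-/

section

variable {α : Type*}

lemma sublist_take_minPrefixLen {A W : List α} (h : W <+ A) :
    W <+ A.take (minPrefixLen A W) :=
  Nat.sInf_mem (⟨A.length, by simpa using h⟩ : Set.Nonempty {n | W <+ A.take n})

lemma sublist_drop_minSuffixLen {A W : List α} (h : W <+ A) :
    W <+ A.drop (A.length - minSuffixLen A W) :=
  Nat.sInf_mem (⟨A.length, by simpa using h⟩ :
    Set.Nonempty {n | W <+ A.drop (A.length - n)})

lemma append_cons_sublist_of_mem_drop_take {A U V : List α} {c : α} {p x : ℕ}
    (hU : U <+ A.take p) (hc : c ∈ (A.take x).drop p) (hV : V <+ A.drop x) :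
    U ++ c :: V <+ A := by
  have hpx : p ≤ x := by
    have : p < (A.take x).length := by
      by_contra! hle
      simp [drop_eq_nil_iff.mpr hle] at hc
    exact (this.trans_le (by simp)).le
  have hsplit : A.take p ++ ((A.take x).drop p ++ A.drop x) = A := by
    have hpre : A.take p = (A.take x).take p := by rw [take_take, min_eq_left hpx]
    rw [hpre, ← append_assoc, take_append_drop, take_append_drop]
  rw [← hsplit]
  exact hU.append ((singleton_sublist.mpr hc).append hV)

lemma take_append_cons_drop_sublist_of_mem_Middle {A W : List α} {k : ℕ} {c : α}
    (h : W <+ A) (hc : c ∈ Middle A W k) :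
    W.take k ++ c :: W.drop k <+ A :=
  append_cons_sublist_of_mem_drop_take
    (sublist_take_minPrefixLen ((take_sublist k W).trans h)) hc
    (sublist_drop_minSuffixLen ((drop_sublist k W).trans h))

lemma sublist_take_append_cons_drop (W : List α) (k : ℕ) (c : α) :
    W <+ W.take k ++ c :: W.drop k := by
  simpa using (sublist_cons_self c (W.drop k)).append_left (W.take k)

lemma IsCommonSubseq.insert_of_forall_mem_Middle {𝒜 : Finset (List α)} {W : List α}
    {k : ℕ} {c : α} (hW : IsCommonSubseq 𝒜 W) (hc : ∀ A ∈ 𝒜, c ∈ Middle A W k) :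
    IsCommonSubseq 𝒜 (W.take k ++ c :: W.drop k) :=
  fun A hA => take_append_cons_drop_sublist_of_mem_Middle (hW A hA) (hc A hA)

lemma length_eq_of_forall_lt_length_succ {f : ℕ → List α} {n : ℕ} (hf0 : f 0 = [])
    (hstep : ∀ i < n, (f (i + 1)).length = (f i).length + 1) :
    (f n).length = n := by
  induction n with
  | zero => simp [hf0]
  | succ n ih =>
    rw [hstep n n.lt_succ_self, ih fun i hi => hstep i (hi.trans n.lt_succ_self)]

end

theorem stmt11 {α : Type*} (𝒜 : Finset (List α)) :
    -- a valid insertion strictly enlarges the common subsequence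
    (∀ (W : List α), IsCommonSubseq 𝒜 W →
      (∃ k : ℕ, k ≤ W.length ∧ ∃ c : α, ∀ A ∈ 𝒜, c ∈ Middle A W k) →
      ∃ V : List α, IsCommonSubseq 𝒜 V ∧ W <+ V ∧ W ≠ V ∧ W.length < V.length) ∧
    -- consequently, any procedure performing such insertions starting from the empty
    -- string reaches a maximal common subsequence after at most `min_l |A_l|` insertions
    (∀ (A₀ : List α), A₀ ∈ 𝒜 → (∀ A ∈ 𝒜, A₀.length ≤ A.length) →
      ∀ f : ℕ → List α, f 0 = [] →
        (∀ i, IsCommonSubseq 𝒜 (f i)) →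
        (∀ i, ¬ IsMCS 𝒜 (f i) →
          f i <+ f (i + 1) ∧ (f (i + 1)).length = (f i).length + 1) →
        ∃ i ≤ A₀.length, IsMCS 𝒜 (f i)) := by
  refine ⟨fun W hW ⟨k, hk, c, hc⟩ => ?_, fun A₀ hA₀ _ f hf0 hcs hstep => ?_⟩
  · have hlen : (W.take k ++ c :: W.drop k).length = W.length + 1 := by
      simp only [length_append, length_take, length_cons, length_drop]; omega
    exact ⟨_, hW.insert_of_forall_mem_Middle hc, sublist_take_append_cons_drop W k c,
      fun h => by simp [← h] at hlen, by omega⟩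
  · by_contra! hnone
    have hlong := length_eq_of_forall_lt_length_succ (n := A₀.length + 1) hf0
      fun i hi => (hstep i (hnone i (by omega))).2
    have hshort := (hcs (A₀.length + 1) A₀ hA₀).length_le
    omega
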